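/- With π: P(X) ∪ {1} → W(X) the reduction map defined as above, for all u, v, w: π(u) = π(v) if and only if π(uw) = π(vw). -/
import Mathlib


inductive Wd (X : Type) : Type
  | one : Wd X
  | of : X → Wd X
  | mul : Wd X → Wd X → Wd X

namespace Wd

variable {X : Type}

/-- Product of possibly-empty words: the empty word `one` acts as identity;
otherwise the product is the formal (magma) product. -/
def cmul : Wd X → Wd X → Wd X
  | one, v => v
  | u, one => u
  | u, v => mul u v

/-- Number of letters of a word. -/
def len : Wd X → ℕ
  | one => 0
  | of _ => 1
  | mul u v => len u + len v

/-- The set of subwords of a word. -/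
def Sub : Wd X → Set (Wd X)
  | one => {one}
  | of x => {of x}
  | mul u v => insert (mul u v) (Sub u ∪ Sub v)

/-- `v ∈ W(X)`: `v` is an element of `P(X) ∪ {1}` (the empty word occurs only
as the whole word) having no subword of the form `uu` or `(uw)w`. -/
def InW (v : Wd X) : Prop :=
  (∀ w ∈ Sub v, w = one → v = one) ∧
  (∀ u : Wd X, mul u u ∉ Sub v) ∧
  (∀ u w : Wd X, mul (mul u w) w ∉ Sub v)

/-- Left-normed product of a list of words. -/
def prodL : List (Wd X) → Wd X
  | [] => one
  | a :: l => l.foldl cmul a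

/-- The left-normed symmetric word `b₁b₂⋯b_k b_{k-1}⋯b₁` built from `[b₁,…,b_k]`. -/
def symW (l : List (Wd X)) : Wd X := prodL (l ++ l.reverse.tail)

/-- `lpad a l` is the left-normed product `a·l₁⋯lₙ`, with the convention that
`1·l₁⋯lₙ` means `l₁⋯lₙ`. -/
def lpad (a : Wd X) (l : List (Wd X)) : Wd X :=
  match a with
  | one => prodL l
  | _ => prodL (a :: l)

/-- Specification of the reduction map `π : P(X) ∪ {1} → W(X)`. -/
structure PiSpec (π : Wd X → Wd X) : Prop where
  map_one : π one = one
  map_of : ∀ x : X, π (of x) = of x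
  mem_W : ∀ v, InW (π v)
  fix : ∀ v, InW v → π v = v
  cancel_sq : ∀ u, InW u → π (mul u u) = one
  cancel : ∀ a v, InW (mul a v) → π (mul (mul a v) v) = a
  keep : ∀ u v, InW u → InW v → InW (mul u v) → π (mul u v) = mul u v
  red : ∀ u v, π (mul u v) = π (cmul (π u) (π v))

end Wd

namespace Wd

variable {X : Type}

lemma cmul_one' (u : Wd X) : cmul u one = u := by cases u <;> rfl
lemma one_cmul' (v : Wd X) : cmul one v = v := by cases v <;> rfl
lemma cmul_ne {u v : Wd X} (hu : u ≠ one) (hv : v ≠ one) : cmul u v = mul u v := by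
  cases u <;> cases v <;> first | rfl | simp_all

lemma mem_sub_self (v : Wd X) : v ∈ Sub v := by cases v <;> simp [Sub]

lemma not_one_mem {v : Wd X} (hv : InW v) (h : v ≠ one) : one ∉ Sub v :=
  fun hm => h (hv.1 one hm rfl)

lemma inW_mul_cases {a b : Wd X} (ha : InW a) (hb : InW b) (ha1 : a ≠ one)
    (hb1 : b ≠ one) : InW (mul a b) ∨ a = b ∨ ∃ c, a = mul c b := by
  by_cases hab : a = b
  · exact Or.inr (Or.inl hab)
  by_cases hc : ∃ c, a = mul c b
  · exact Or.inr (Or.inr hc)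
  left
  refine ⟨?_, ?_, ?_⟩
  · intro w hw hw1
    subst hw1
    rcases hw with h | h | h
    · exact absurd h.symm (by simp)
    · exact absurd h (not_one_mem ha ha1)
    · exact absurd h (not_one_mem hb hb1)
  · intro u hu
    rcases hu with h | h | h
    · obtain ⟨h1, h2⟩ := Wd.mul.inj h
      exact hab (h1.symm.trans h2)
    · exact ha.2.1 u h
    · exact hb.2.1 u h
  · intro c w hw
    rcases hw with h | h | h
    · obtain ⟨h1, h2⟩ := Wd.mul.inj h
      exact hc ⟨c, by rw [← h1, h2]⟩
    · exact ha.2.2 c w h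
    · exact hb.2.2 c w h

lemma pi_cmul {π : Wd X → Wd X} (hπ : PiSpec π) (u v : Wd X) :
    π (cmul u v) = π (cmul (π u) (π v)) := by
  by_cases hu : u = one
  · subst hu
    rw [one_cmul', hπ.map_one, one_cmul', hπ.fix _ (hπ.mem_W v)]
  by_cases hv : v = one
  · subst hv
    rw [cmul_one', hπ.map_one, cmul_one', hπ.fix _ (hπ.mem_W u)]
  rw [cmul_ne hu hv, hπ.red]

lemma key {π : Wd X → Wd X} (hπ : PiSpec π) (a b : Wd X) (ha : InW a) (hb : InW b) :
    π (cmul (π (cmul a b)) b) = a := by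
  by_cases hb1 : b = one
  · subst hb1
    rw [cmul_one', cmul_one', hπ.fix _ ha, hπ.fix _ ha]
  by_cases ha1 : a = one
  · subst ha1
    rw [one_cmul', hπ.fix _ hb, cmul_ne hb1 hb1, hπ.cancel_sq b hb]
  rw [cmul_ne ha1 hb1]
  rcases inW_mul_cases ha hb ha1 hb1 with h | h | ⟨c, h⟩
  · rw [hπ.fix _ h, cmul_ne (by simp) hb1, hπ.cancel a b h]
  · subst h
    rw [hπ.cancel_sq a ha, one_cmul', hπ.fix _ ha]
  · subst h
    rw [hπ.cancel c b ha]
    have hc1 : c ≠ one := by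
      intro h1
      subst h1
      exact not_one_mem ha ha1 (by simp [Sub, mem_sub_self])
    rw [cmul_ne hc1 hb1, hπ.fix _ ha]

end Wd

open Wd in
/-- `π(u) = π(v)` if and only if `π(uw) = π(vw)`. -/
theorem pi_eq_iff_mul_right {X : Type} (π : Wd X → Wd X) (hπ : PiSpec π)
    (u v w : Wd X) :
    π u = π v ↔ π (cmul u w) = π (cmul v w) := by
  constructor
  · intro h
    rw [pi_cmul hπ u w, pi_cmul hπ v w, h]
  · intro h
    have h1 := key hπ (π u) (π w) (hπ.mem_W u) (hπ.mem_W w)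
    have h2 := key hπ (π v) (π w) (hπ.mem_W v) (hπ.mem_W w)
    rw [← pi_cmul hπ u w] at h1
    rw [← pi_cmul hπ v w] at h2
    rw [← h1, ← h2, h]
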